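/- Let n ≥ 2 and let d = (d_1, …, d_n) be integers with 2 ≤ d_1 ≤ ⋯ ≤ d_n and d_n − 1 > ∑_{i=1}^{n−1}(d_i − 1). Then for every n-player game X of format d over ℂ, the Nash equilibrium set of X is nonempty if and only if there exist nonzero vectors π^{(1)} ∈ ℂ^{d_1}, …, π^{(n−1)} ∈ ℂ^{d_{n−1}} such that all entries of the contraction X^{(n)}(π_{−n}) ∈ ℂ^{d_n} are equal. -/

import Mathlib

/-!
The equilibrium condition for a player `i ≠ n` says that `X⁽ⁱ⁾(π₋ᵢ)` lies in the line
spanned by the all-ones vector, and `X⁽ⁱ⁾(π₋ᵢ)` is linear in `π⁽ⁿ⁾`. So once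
`π⁽¹⁾, …, π⁽ⁿ⁻¹⁾` satisfy the condition for player `n`, the remaining conditions cut out
the kernel of a linear map from `ℂ^{dₙ}` to the product of the quotients `ℂ^{dᵢ} / ℂ·𝟙`,
of dimension `∑_{i<n} (dᵢ - 1) < dₙ`; any nonzero vector of that kernel is a `π⁽ⁿ⁾`.
-/

/-- Insert the value `s` at position `i` into an index tuple defined on all positions `≠ i`,
producing a full multi-index in `∏ k, Fin (d k)`. -/
def insertAt {n : ℕ} (d : Fin n → ℕ) (i : Fin n) (s : Fin (d i))
    (j : ∀ m : {m : Fin n // m ≠ i}, Fin (d m.1)) : ∀ k, Fin (d k) :=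
  fun k => if h : k = i then Fin.cast (congrArg d h.symm) s else j ⟨k, h⟩

/-- The contraction `X⁽ⁱ⁾(π₋ᵢ) ∈ K^{dᵢ}`: its `s`-th entry is
`∑_{j₋ᵢ} X_{(s, j₋ᵢ)} ∏_{l ≠ i} π⁽ˡ⁾_{j_l}`. -/
noncomputable def contraction {n : ℕ} (d : Fin n → ℕ) {K : Type*} [CommRing K] (i : Fin n)
    (X : (∀ k, Fin (d k)) → K)
    (π : ∀ m : {m : Fin n // m ≠ i}, Fin (d m.1) → K) (s : Fin (d i)) : K :=
  ∑ j : ∀ m : {m : Fin n // m ≠ i}, Fin (d m.1),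
    X (insertAt d i s j) * ∏ m : {m : Fin n // m ≠ i}, π m (j m)

open Module Function

variable {n : ℕ} {d : Fin n → ℕ} {K : Type*}

section CommRing

variable [CommRing K]

noncomputable def contractionMultilinear (i : Fin n) (X : (∀ k, Fin (d k)) → K)
    (s : Fin (d i)) : MultilinearMap K (fun m : {m : Fin n // m ≠ i} => Fin (d m.1) → K) K :=
  ∑ j : ∀ m : {m : Fin n // m ≠ i}, Fin (d m.1), X (insertAt d i s j) •
    (MultilinearMap.mkPiAlgebra K _ K).compLinearMap fun m => LinearMap.proj (j m)

theorem contractionMultilinear_apply (i : Fin n) (X : (∀ k, Fin (d k)) → K) (s : Fin (d i))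
    (π : ∀ m : {m : Fin n // m ≠ i}, Fin (d m.1) → K) :
    contractionMultilinear i X s π = contraction d i X π s := by
  simp [contractionMultilinear, contraction]

noncomputable def contractionLinearIn (i j : Fin n) (hji : j ≠ i) (X : (∀ k, Fin (d k)) → K)
    (ρ : ∀ k, Fin (d k) → K) : (Fin (d j) → K) →ₗ[K] Fin (d i) → K :=
  LinearMap.pi fun s =>
    (contractionMultilinear i X s).toLinearMap (fun m => ρ m.1) ⟨j, hji⟩

theorem contractionLinearIn_apply (i j : Fin n) (hji : j ≠ i) (X : (∀ k, Fin (d k)) → K)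
    (ρ : ∀ k, Fin (d k) → K) (v : Fin (d j) → K) :
    contractionLinearIn i j hji X ρ v =
      contraction d i X fun m => update ρ j v m.1 := by
  funext s
  rw [contractionLinearIn, LinearMap.pi_apply, MultilinearMap.toLinearMap_apply,
    contractionMultilinear_apply,
    ← update_comp_eq_of_injective' ρ Subtype.val_injective (⟨j, hji⟩ : {m : Fin n // m ≠ i})]

def extendByZero (i : Fin n) (π : ∀ m : {m : Fin n // m ≠ i}, Fin (d m.1) → K) :
    ∀ k, Fin (d k) → K :=
  fun k => if h : k = i then 0 else π ⟨k, h⟩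

theorem update_extendByZero_of_ne {i k : Fin n} (hk : k ≠ i)
    (π : ∀ m : {m : Fin n // m ≠ i}, Fin (d m.1) → K) (v : Fin (d i) → K) :
    update (extendByZero i π) i v k = π ⟨k, hk⟩ := by
  rw [update_of_ne hk, extendByZero, dif_neg hk]

theorem restrict_update_extendByZero (i : Fin n)
    (π : ∀ m : {m : Fin n // m ≠ i}, Fin (d m.1) → K) (v : Fin (d i) → K) :
    (fun m : {m : Fin n // m ≠ i} => update (extendByZero i π) i v m.1) = π :=
  funext fun m => update_extendByZero_of_ne m.2 π v

end CommRing

section Field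

variable [Field K]

local notation "ℓ[" m "]" => (Fin m → K) ⧸ K ∙ (1 : Fin m → K)

theorem mem_span_one_iff_forall_eq {ι : Type*} (w : ι → K) :
    w ∈ K ∙ (1 : ι → K) ↔ ∀ s t, w s = w t := by
  refine ⟨fun hw s t => ?_, fun hw => ?_⟩
  · obtain ⟨c, rfl⟩ := Submodule.mem_span_singleton.mp hw
    simp
  · rcases isEmpty_or_nonempty ι with hι | ⟨⟨s⟩⟩
    · simp [Subsingleton.elim w 0]
    · exact Submodule.mem_span_singleton.mpr ⟨w s, funext fun t => by simp [hw s t]⟩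

theorem finrank_quotient_span_one_le (m : ℕ) :
    finrank K ℓ[m] ≤ m - 1 := by
  rcases Nat.eq_zero_or_pos m with rfl | hm
  · simpa using Submodule.finrank_quotient_le (K ∙ (1 : Fin 0 → K))
  · have : Nonempty (Fin m) := ⟨⟨0, hm⟩⟩
    have := (K ∙ (1 : Fin m → K)).finrank_quotient_add_finrank
    rw [finrank_span_singleton one_ne_zero, finrank_fin_fun] at this
    omega

theorem exists_ne_zero_forall_contraction_eq (j : Fin n)
    (hdim : ∑ i ∈ Finset.univ.erase j, (d i - 1) < d j) (X : Fin n → (∀ k, Fin (d k)) → K)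
    (ρ : ∀ k, Fin (d k) → K) :
    ∃ v ≠ 0, ∀ i, i ≠ j → ∀ s t,
      contraction d i (X i) (fun m => update ρ j v m.1) s =
        contraction d i (X i) (fun m => update ρ j v m.1) t := by
  let L : (Fin (d j) → K) →ₗ[K] ∀ i : {i : Fin n // i ≠ j}, ℓ[d i.1] :=
    LinearMap.pi fun i => (K ∙ 1).mkQ ∘ₗ contractionLinearIn i.1 j (Ne.symm i.2) (X i.1) ρ
  have hrank : finrank K (∀ i : {i : Fin n // i ≠ j}, ℓ[d i.1]) <
      finrank K (Fin (d j) → K) :=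
    calc _ = ∑ i : {i : Fin n // i ≠ j}, finrank K ℓ[d i.1] :=
          finrank_pi_fintype K
      _ ≤ ∑ i : {i : Fin n // i ≠ j}, (d i.1 - 1) :=
          Finset.sum_le_sum fun _ _ => finrank_quotient_span_one_le _
      _ = ∑ i ∈ Finset.univ.erase j, (d i - 1) :=
          (Finset.sum_subtype _ (fun _ => by simp) (fun i => d i - 1)).symm
      _ < _ := by rwa [finrank_fin_fun]
  obtain ⟨v, hvL, hv⟩ :=
    Submodule.exists_mem_ne_zero_of_ne_bot (LinearMap.ker_ne_bot_of_finrank_lt (f := L) hrank)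
  refine ⟨v, hv, fun i hij => ?_⟩
  have hLi := congrFun (LinearMap.mem_ker.mp hvL) ⟨i, hij⟩
  simpa only [L, LinearMap.pi_apply, LinearMap.coe_comp, comp_apply, Submodule.mkQ_apply,
    Pi.zero_apply, Submodule.Quotient.mk_eq_zero, mem_span_one_iff_forall_eq,
    contractionLinearIn_apply] using hLi

end Field

/-- if `2 ≤ d₁ ≤ ⋯ ≤ dₙ` and `dₙ - 1 > ∑_{i=1}^{n-1} (dᵢ - 1)`, then for
every game `X` of format `d` over `ℂ`, the Nash equilibrium set is nonempty iff there
exist nonzero `π⁽¹⁾, …, π⁽ⁿ⁻¹⁾` with all entries of `X⁽ⁿ⁾(π₋ₙ)` equal. -/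
theorem nash_nonempty_iff_last_contraction (n : ℕ) (hn : 2 ≤ n) (d : Fin n → ℕ)
    (hfmt : ∑ i ∈ Finset.univ.erase (⟨n - 1, by omega⟩ : Fin n), (d i - 1) <
      d ⟨n - 1, by omega⟩ - 1)
    (X : ∀ i : Fin n, (∀ k, Fin (d k)) → ℂ) :
    (∃ π : ∀ k, Fin (d k) → ℂ, (∀ k, π k ≠ 0) ∧
      ∀ i : Fin n, ∀ s t : Fin (d i),
        contraction d i (X i) (fun m => π m.1) s =
          contraction d i (X i) (fun m => π m.1) t) ↔
    (∃ π : ∀ m : {m : Fin n // m ≠ (⟨n - 1, by omega⟩ : Fin n)}, Fin (d m.1) → ℂ,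
      (∀ m, π m ≠ 0) ∧
      ∀ s t : Fin (d (⟨n - 1, by omega⟩ : Fin n)),
        contraction d ⟨n - 1, by omega⟩ (X ⟨n - 1, by omega⟩) π s =
          contraction d ⟨n - 1, by omega⟩ (X ⟨n - 1, by omega⟩) π t) := by
  refine ⟨fun ⟨π, hπ, heq⟩ => ⟨fun m => π m.1, fun m => hπ m.1, heq _⟩, ?_⟩
  rintro ⟨π, hπ, heq⟩
  obtain ⟨v, hv, hothers⟩ :=
    exists_ne_zero_forall_contraction_eq ⟨n - 1, by omega⟩ (by omega) X
      (extendByZero ⟨n - 1, by omega⟩ π)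
  refine ⟨update (extendByZero _ π) _ v, fun k => ?_, fun i => ?_⟩
  · by_cases hk : k = ⟨n - 1, by omega⟩
    · subst hk
      rwa [update_self]
    · rw [update_extendByZero_of_ne hk]
      exact hπ _
  · by_cases hi : i = ⟨n - 1, by omega⟩
    · subst hi
      rw [restrict_update_extendByZero]
      exact heq
    · exact hothers i hi
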